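/- Let K be a Euclidean cubical complex in ℝⁿ, let σ be a cube of K, and let τ, v be vertices of σ with τ ⪯ v such that τ is a free face of σ; let K' be the (τ, σ)-collapse of K. Then pastlk(K'|_σ, v) = pastlk(K|_σ, v) ∖ { j ∈ {0,1}ⁿ ∖ {0} : v − j ⪯ τ }. -/
import Mathlib


open Set

namespace DCC

/-- The real point corresponding to an integer point of `ℤⁿ`. -/
def toR {n : ℕ} (v : Fin n → ℤ) : Fin n → ℝ := fun i => (v i : ℝ)

/-- `j ∈ {0,1}ⁿ`: every coordinate of `j` is `0` or `1`. -/
def IsBinary {n : ℕ} (j : Fin n → ℤ) : Prop := ∀ i, j i = 0 ∨ j i = 1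

/-- The elementary cube `[v - j, v] = {x : v - j ⪯ x ⪯ v}` in `ℝⁿ`. -/
def cube {n : ℕ} (v j : Fin n → ℤ) : Set (Fin n → ℝ) := Set.Icc (toR (v - j)) (toR v)

/-- A subset of `ℝⁿ` which is an elementary cube. -/
def IsElemCube {n : ℕ} (σ : Set (Fin n → ℝ)) : Prop := ∃ v j, IsBinary j ∧ σ = cube v j

/-- A Euclidean cubical complex: a finite union of elementary cubes. -/
def IsComplex {n : ℕ} (K : Set (Fin n → ℝ)) : Prop :=
  ∃ C : Finset ((Fin n → ℤ) × (Fin n → ℤ)),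
    (∀ c ∈ C, IsBinary c.2) ∧ K = ⋃ c ∈ C, cube c.1 c.2

/-- The past link of `v` in `K`: all nonzero binary `j` with `[v - j, v] ⊆ K`. -/
def pastlk {n : ℕ} (K : Set (Fin n → ℝ)) (v : Fin n → ℤ) : Set (Fin n → ℤ) :=
  {j | IsBinary j ∧ j ≠ 0 ∧ cube v j ⊆ K}

/-- A maximal cube of `K`: a cube of `K` not properly contained in another cube of `K`. -/
def IsMaximalCube {n : ℕ} (K σ : Set (Fin n → ℝ)) : Prop :=
  IsElemCube σ ∧ σ ⊆ K ∧ ∀ γ, IsElemCube γ → γ ⊆ K → σ ⊆ γ → γ = σ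

/-- `τ` is a free face of the maximal cube `σ` in `K`: `τ` is a proper face of `σ` and
`σ` is the unique maximal cube of `K` containing `τ`. -/
def IsFreeFace {n : ℕ} (K τ σ : Set (Fin n → ℝ)) : Prop :=
  IsElemCube τ ∧ τ ⊂ σ ∧ IsMaximalCube K σ ∧
    ∀ γ, IsMaximalCube K γ → τ ⊆ γ → γ = σ

/-- The `(τ, σ)`-collapse of `K`: the union of all cubes of `K` that do not contain `τ`. -/
def collapse {n : ℕ} (K τ : Set (Fin n → ℝ)) : Set (Fin n → ℝ) :=
  ⋃₀ {γ | IsElemCube γ ∧ γ ⊆ K ∧ ¬ τ ⊆ γ}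

/-- The restriction `K|_σ` where `σ` has minimum vertex `a` and maximum vertex `b`:
the union of all cubes `γ` of `K` with `a ⪯ min γ` and `max γ ⪯ b`. -/
def restrict {n : ℕ} (K : Set (Fin n → ℝ)) (a b : Fin n → ℤ) : Set (Fin n → ℝ) :=
  ⋃₀ {γ | ∃ v j, IsBinary j ∧ γ = cube v j ∧ cube v j ⊆ K ∧ a ≤ v - j ∧ v ≤ b}

/-- The geometric realization of the past link of `v` in `K`, as a subset of `ℝⁿ`:
the union over `j ∈ pastlk K v` of the convex hulls of `{v - eᵢ : jᵢ = 1}`. -/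
def geomReal {n : ℕ} (K : Set (Fin n → ℝ)) (v : Fin n → ℤ) : Set (Fin n → ℝ) :=
  ⋃ j ∈ pastlk K v, convexHull ℝ ((fun i => toR v - Pi.single i (1 : ℝ)) '' {i | j i = 1})

/-- The space of dipaths in `K` from `p` to `q`, as a subspace of
`C([0,1], ℝⁿ)` with the compact-open topology. -/
def DipathSpace {n : ℕ} (K : Set (Fin n → ℝ)) (p q : Fin n → ℝ) :
    Set C(unitInterval, Fin n → ℝ) :=
  {γ | (∀ t, γ t ∈ K) ∧ γ 0 = p ∧ γ 1 = q ∧ Monotone ⇑γ}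

/-- The reachable complex `R(K, p)`: points of `K` reachable from `p` by a dipath in `K`. -/
def reach {n : ℕ} (K : Set (Fin n → ℝ)) (p : Fin n → ℝ) : Set (Fin n → ℝ) :=
  {q ∈ K | (DipathSpace K p q).Nonempty}

/-- `(τ, σ)` is an LPDC pair in `K` (where `K'` is the `(τ,σ)`-collapse of `K`):
for every vertex `v` of `K'`, the geometric realizations of the past links of `v`
in `K` and in `K'` are homotopy equivalent. -/
def IsLPDCPair {n : ℕ} (K τ : Set (Fin n → ℝ)) : Prop :=
  ∀ v : Fin n → ℤ, toR v ∈ collapse K τ →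
    Nonempty (ContinuousMap.HomotopyEquiv ↥(geomReal K v) ↥(geomReal (collapse K τ) v))



lemma toR_le_iff {n : ℕ} {a b : Fin n → ℤ} : toR a ≤ toR b ↔ a ≤ b := by
  constructor <;> intro h i <;> have h' := h i <;>
    simp only [toR] at h' ⊢ <;> exact_mod_cast h'

lemma mem_cube_iff {n : ℕ} {x v j : Fin n → ℤ} :
    toR x ∈ cube v j ↔ v - j ≤ x ∧ x ≤ v := by
  simp [cube, Set.mem_Icc, toR_le_iff]

lemma binary_nonneg {n : ℕ} {j : Fin n → ℤ} (h : IsBinary j) : 0 ≤ j := by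
  intro i; rcases h i with h' | h' <;> simp [h']

lemma self_mem_cube {n : ℕ} {v j : Fin n → ℤ} (h : IsBinary j) : toR v ∈ cube v j :=
  mem_cube_iff.mpr ⟨sub_le_self _ (binary_nonneg h), le_refl _⟩

lemma min_mem_cube {n : ℕ} {v j : Fin n → ℤ} (h : IsBinary j) : toR (v - j) ∈ cube v j :=
  mem_cube_iff.mpr ⟨le_refl _, sub_le_self _ (binary_nonneg h)⟩

lemma restrict_subset {n : ℕ} {K : Set (Fin n → ℝ)} {a b : Fin n → ℤ} :
    restrict K a b ⊆ K := by
  intro x hx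
  obtain ⟨γ, ⟨w, jw, _, rfl, hsub, _, _⟩, hxγ⟩ := hx
  exact hsub hxγ

lemma collapse_subset {n : ℕ} {K τ : Set (Fin n → ℝ)} : collapse K τ ⊆ K := by
  rintro x ⟨γ, ⟨_, hγK, _⟩, hxγ⟩; exact hγK hxγ

lemma tau_mem_cube_tau {n : ℕ} {τ : Fin n → ℤ} : toR τ ∈ cube τ 0 :=
  mem_cube_iff.mpr ⟨by simp, le_refl _⟩

lemma tau_not_mem_collapse {n : ℕ} {K : Set (Fin n → ℝ)} {τ : Fin n → ℤ} :
    toR τ ∉ collapse K (cube τ 0) := by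
  rintro ⟨γ, ⟨_, _, hnot⟩, hx⟩
  exact hnot (fun y hy => by
    have hy' : y = toR τ := le_antisymm hy.2 (by simpa [sub_zero] using hy.1)
    rwa [hy'])

lemma mem_restrict_bounds {n : ℕ} {K : Set (Fin n → ℝ)} {a b x : Fin n → ℤ}
    (h : toR x ∈ restrict K a b) : a ≤ x ∧ x ≤ b := by
  obtain ⟨γ, ⟨w, jw, _, rfl, _, haw, hwb⟩, hx⟩ := h
  exact ⟨le_trans haw (toR_le_iff.mp hx.1), le_trans (toR_le_iff.mp hx.2) hwb⟩

lemma cube_subset_restrict {n : ℕ} {K : Set (Fin n → ℝ)} {a b v j : Fin n → ℤ}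
    (hj : IsBinary j) (hK : cube v j ⊆ K) (ha : a ≤ v - j) (hb : v ≤ b) :
    cube v j ⊆ restrict K a b :=
  Set.subset_sUnion_of_mem ⟨v, j, hj, rfl, hK, ha, hb⟩

lemma cube_subset_collapse {n : ℕ} {K : Set (Fin n → ℝ)} {τ v j : Fin n → ℤ}
    (hj : IsBinary j) (hK : cube v j ⊆ K) (hτ : toR τ ∉ cube v j) :
    cube v j ⊆ collapse K (cube τ 0) :=
  Set.subset_sUnion_of_mem ⟨⟨v, j, hj, rfl⟩, hK, fun hsub => hτ (hsub tau_mem_cube_tau)⟩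


theorem statement9 (n : ℕ) (hn : 0 < n) (K : Set (Fin n → ℝ)) (hK : IsComplex K)
    (vσ jσ : Fin n → ℤ) (hjσ : IsBinary jσ) (hσK : cube vσ jσ ⊆ K)
    (τ v : Fin n → ℤ)
    (hτ1 : vσ - jσ ≤ τ) (hτ2 : τ ≤ vσ)
    (hv1 : vσ - jσ ≤ v) (hv2 : v ≤ vσ)
    (hτv : τ ≤ v)
    (hfree : IsFreeFace K (cube τ 0) (cube vσ jσ)) :
    pastlk (restrict (collapse K (cube τ 0)) (vσ - jσ) vσ) v
      = pastlk (restrict K (vσ - jσ) vσ) v \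
          {j | IsBinary j ∧ j ≠ 0 ∧ v - j ≤ τ} := by
  ext j
  simp only [pastlk, Set.mem_setOf_eq, Set.mem_diff]
  constructor
  · rintro ⟨hbin, hne, hsub⟩
    have hbound : vσ - jσ ≤ v - j :=
      (mem_restrict_bounds (hsub (min_mem_cube hbin))).1
    have hsubK : cube v j ⊆ K :=
      fun x hx => collapse_subset (restrict_subset (hsub hx))
    have hnτ : ¬ v - j ≤ τ := by
      intro hle
      exact tau_not_mem_collapse
        (restrict_subset (hsub (mem_cube_iff.mpr ⟨hle, hτv⟩)))
    exact ⟨⟨hbin, hne, cube_subset_restrict hbin hsubK hbound hv2⟩,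
      fun h => hnτ h.2.2⟩
  · rintro ⟨⟨hbin, hne, hsub⟩, hnot⟩
    have hnτ : ¬ v - j ≤ τ := fun h => hnot ⟨hbin, hne, h⟩
    have hbound : vσ - jσ ≤ v - j :=
      (mem_restrict_bounds (hsub (min_mem_cube hbin))).1
    have hsubK : cube v j ⊆ K := fun x hx => restrict_subset (hsub hx)
    have hτ : toR τ ∉ cube v j := fun h => hnτ (mem_cube_iff.mp h).1
    exact ⟨hbin, hne,
      cube_subset_restrict hbin (cube_subset_collapse hbin hsubK hτ) hbound hv2⟩


end DCC
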